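/- In the Leibniz algebra μ2, every automorphism φ satisfies: the e_1-coefficient a_1 of φ(e_1) and the f_1-coefficient b_1 of φ(e_1) satisfy a_1(a_1 + b_1) ≠ 0, and the e_i-coefficient of φ(e_i) equals (a_1 + b_1)^{i−1} a_1 for 1 ≤ i ≤ n−2k. -/
import Mathlib


/-- Underlying space of the Leibniz algebra `μ₂`: `e`-part has `m + 4 = n - 2k`
coordinates, `f`-part has `2(k+1)` (paper `k ≥ 1` is `k + 1` here, `n ≥ 2k + 4`). -/
abbrev Mu2V (m k : ℕ) (K : Type*) := (Fin (m + 4) → K) × (Fin (2 * (k + 1)) → K)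

variable {K : Type*} [Field K]

/-- Basis vector `e_{i+1}` (0-indexed). -/
def eb2 (K : Type*) [Field K] (m k : ℕ) (i : Fin (m + 4)) : Mu2V m k K := (Pi.single i 1, 0)

/-- The bracket of `μ₂`: `[e_i,e_1] = e_{i+1}` for `1 ≤ i ≤ n - 2k - 1`,
`[e_1,f_1] = e_2 + f_{k+1}`, `[e_i,f_1] = e_{i+1}` for `2 ≤ i ≤ n - 2k - 1`,
`[e_1,f_j] = f_{k+j}` for `2 ≤ j ≤ k` (paper indexing), other products zero. -/
def mu2Br (K : Type*) [Field K] (m k : ℕ) (x y : Mu2V m k K) : Mu2V m k K :=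
  (fun i => if 1 ≤ (i : ℕ) then
      x.1 ⟨(i : ℕ) - 1, lt_of_le_of_lt (Nat.sub_le _ _) i.isLt⟩ *
        (y.1 ⟨0, Nat.succ_pos _⟩ + y.2 ⟨0, Nat.succ_pos _⟩)
    else 0,
   fun j => if k + 1 ≤ (j : ℕ) then
      x.1 ⟨0, Nat.succ_pos _⟩ * y.2 ⟨(j : ℕ) - (k + 1), lt_of_le_of_lt (Nat.sub_le _ _) j.isLt⟩
    else 0)

/-- `φ` is an automorphism of `μ₂`. -/
def IsMu2Aut (m k : ℕ) (φ : Mu2V m k K →ₗ[K] Mu2V m k K) : Prop :=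
  Function.Bijective φ ∧ ∀ x y, φ (mu2Br K m k x y) = mu2Br K m k (φ x) (φ y)

/-- Every automorphism `φ` of `μ₂` satisfies: with `a_1` the `e_1`-coefficient and
`b_1` the `f_1`-coefficient of `φ(e_1)`, one has `a_1 (a_1 + b_1) ≠ 0` and the
`e_i`-coefficient of `φ(e_i)` equals `(a_1 + b_1)^{i-1} a_1` for `1 ≤ i ≤ n - 2k`. -/
theorem stmt19 (K : Type*) [Field K] [CharZero K] (m k : ℕ)
    (φ : Mu2V m k K →ₗ[K] Mu2V m k K) (hφ : IsMu2Aut m k φ)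
    (a1 b1 : K)
    (ha1 : a1 = (φ (eb2 K m k ⟨0, Nat.succ_pos _⟩)).1 ⟨0, Nat.succ_pos _⟩)
    (hb1 : b1 = (φ (eb2 K m k ⟨0, Nat.succ_pos _⟩)).2 ⟨0, Nat.succ_pos _⟩) :
    a1 * (a1 + b1) ≠ 0 ∧
    ∀ i : Fin (m + 4), (φ (eb2 K m k i)).1 i = (a1 + b1) ^ (i : ℕ) * a1 := by

  obtain ⟨hbij, hbr⟩ := hφ
  have hinj := hbij.injective
  set E := φ (eb2 K m k ⟨0, Nat.succ_pos _⟩) with hE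
  -- [e_i, e_1] = e_{i+1} on basis vectors
  have hbasis : ∀ (i : ℕ) (h : i + 1 < m + 4),
      mu2Br K m k (eb2 K m k ⟨i, Nat.lt_of_succ_lt h⟩) (eb2 K m k ⟨0, Nat.succ_pos _⟩)
        = eb2 K m k ⟨i + 1, h⟩ := by
    intro i h
    refine Prod.ext (funext fun j => ?_) (funext fun j => ?_)
    · simp only [mu2Br, eb2, Pi.single_apply, Fin.ext_iff, Fin.val_mk, Pi.zero_apply, add_zero]
      split_ifs with h1 h2 h3 <;> first | ring1 | (exfalso; omega)
    · simp only [mu2Br, eb2, Pi.zero_apply, mul_zero, ite_self]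
  have hrec : ∀ (i : ℕ) (h : i + 1 < m + 4),
      φ (eb2 K m k ⟨i + 1, h⟩)
        = mu2Br K m k (φ (eb2 K m k ⟨i, Nat.lt_of_succ_lt h⟩)) E := by
    intro i h
    rw [← hbasis i h, hbr]
  have hEsum : E.1 ⟨0, Nat.succ_pos _⟩ + E.2 ⟨0, Nat.succ_pos _⟩ = a1 + b1 := by
    rw [ha1, hb1]
  -- part 2 by induction
  have hmain : ∀ (i : ℕ) (h : i < m + 4),
      (φ (eb2 K m k ⟨i, h⟩)).1 ⟨i, h⟩ = (a1 + b1) ^ i * a1 := by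
    intro i
    induction i with
    | zero =>
      intro h
      rw [pow_zero, one_mul, ha1]
    | succ i ih =>
      intro h
      rw [hrec i h]
      show (if 1 ≤ i + 1 then
          (φ (eb2 K m k ⟨i, Nat.lt_of_succ_lt h⟩)).1 ⟨i + 1 - 1, _⟩ *
            (E.1 ⟨0, Nat.succ_pos _⟩ + E.2 ⟨0, Nat.succ_pos _⟩)
        else 0) = _
      rw [if_pos (Nat.le_add_left 1 i)]
      have : (⟨i + 1 - 1, lt_of_le_of_lt (Nat.sub_le _ _) h⟩ : Fin (m + 4))
          = ⟨i, Nat.lt_of_succ_lt h⟩ := rfl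
      rw [this, ih (Nat.lt_of_succ_lt h), hEsum]
      ring
  -- key vanishing facts under degenerate hypotheses
  have hS : a1 = 0 → ∀ (i : ℕ) (h : i < m + 4), ∀ j : Fin (m + 4),
      (j : ℕ) ≤ i → (φ (eb2 K m k ⟨i, h⟩)).1 j = 0 := by
    intro ha0 i
    induction i with
    | zero =>
      intro h j hj
      have hj0 : j = ⟨0, Nat.succ_pos _⟩ := Fin.ext (show (j : ℕ) = 0 by omega)
      rw [hj0, ← ha1, ha0]
    | succ i ih =>
      intro h j hj
      rw [hrec i h]
      show (if 1 ≤ (j : ℕ) then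
          (φ (eb2 K m k ⟨i, Nat.lt_of_succ_lt h⟩)).1 ⟨(j : ℕ) - 1, _⟩ *
            (E.1 ⟨0, Nat.succ_pos _⟩ + E.2 ⟨0, Nat.succ_pos _⟩)
        else 0) = 0
      split_ifs with h1
      · rw [ih (Nat.lt_of_succ_lt h) ⟨(j : ℕ) - 1, by omega⟩ (show (j:ℕ) - 1 ≤ i by omega), zero_mul]
      · rfl
  -- e_j is nonzero, so φ of it cannot be 0
  have hnz : ∀ (i : ℕ) (h : i < m + 4), φ (eb2 K m k ⟨i, h⟩) ≠ 0 := by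
    intro i h hc
    have h0 : eb2 K m k ⟨i, h⟩ = 0 := hinj (by rw [hc, map_zero])
    have := congrFun (congrArg Prod.fst h0) ⟨i, h⟩
    simp [eb2, Pi.single_apply] at this
  constructor
  · intro h0
    rcases mul_eq_zero.mp h0 with ha0 | hc0
    · -- a1 = 0 : then φ(e_{m+4}) = 0
      apply hnz (m + 2 + 1) (by omega)
      rw [hrec (m + 2) (by omega)]
      refine Prod.ext (funext fun j => ?_) (funext fun j => ?_)
      · show (if 1 ≤ (j : ℕ) then
            (φ (eb2 K m k ⟨m + 2, _⟩)).1 ⟨(j : ℕ) - 1, _⟩ *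
              (E.1 ⟨0, Nat.succ_pos _⟩ + E.2 ⟨0, Nat.succ_pos _⟩)
          else 0) = 0
        split_ifs with h1
        · rw [hS ha0 (m + 2) (by omega) ⟨(j : ℕ) - 1, by omega⟩ (show (j:ℕ) - 1 ≤ m + 2 by omega), zero_mul]
        · rfl
      · show (if k + 1 ≤ (j : ℕ) then
            (φ (eb2 K m k ⟨m + 2, _⟩)).1 ⟨0, Nat.succ_pos _⟩ * E.2 ⟨(j : ℕ) - (k + 1), _⟩
          else 0) = 0
        split_ifs with h1
        · rw [hS ha0 (m + 2) (by omega) ⟨0, by omega⟩ (Nat.zero_le _), zero_mul]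
        · rfl
    · -- a1 + b1 = 0 : then φ(e_3) = 0
      have hsum0 : E.1 ⟨0, Nat.succ_pos _⟩ + E.2 ⟨0, Nat.succ_pos _⟩ = 0 := by
        rw [hEsum, hc0]
      have h1all : ∀ j : Fin (m + 4), (φ (eb2 K m k ⟨1, by omega⟩)).1 j = 0 := by
        intro j
        rw [hrec 0 (by omega)]
        show (if 1 ≤ (j : ℕ) then
            (φ (eb2 K m k ⟨0, _⟩)).1 ⟨(j : ℕ) - 1, _⟩ *
              (E.1 ⟨0, Nat.succ_pos _⟩ + E.2 ⟨0, Nat.succ_pos _⟩)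
          else 0) = 0
        split_ifs with h1
        · rw [hsum0, mul_zero]
        · rfl
      apply hnz (1 + 1) (by omega)
      rw [hrec 1 (by omega)]
      refine Prod.ext (funext fun j => ?_) (funext fun j => ?_)
      · show (if 1 ≤ (j : ℕ) then
            (φ (eb2 K m k ⟨1, _⟩)).1 ⟨(j : ℕ) - 1, _⟩ *
              (E.1 ⟨0, Nat.succ_pos _⟩ + E.2 ⟨0, Nat.succ_pos _⟩)
          else 0) = 0
        split_ifs with h1
        · rw [h1all, zero_mul]
        · rfl
      · show (if k + 1 ≤ (j : ℕ) then
            (φ (eb2 K m k ⟨1, _⟩)).1 ⟨0, Nat.succ_pos _⟩ * E.2 ⟨(j : ℕ) - (k + 1), _⟩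
          else 0) = 0
        split_ifs with h1
        · rw [h1all, zero_mul]
        · rfl
  · intro i
    exact hmain i.1 i.2
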